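/- For every real s > 1, ∑_{p prime} p^{−s} = ∑_{m=1}^∞ (μ(m)/m) · log ζ(ms), where μ denotes the Möbius function. -/

import Mathlib

set_option maxHeartbeats 1600000

open ArithmeticFunction
open scoped ArithmeticFunction.Moebius ArithmeticFunction.zeta

lemma aux_moebius_hasSum (x : ℝ) (hx0 : 0 ≤ x) (hx1 : x < 1) :
    HasSum (fun q : ℕ × ℕ ↦ (μ q.1 : ℝ) * x ^ (q.1 * q.2) / ((q.1 * q.2 : ℕ) : ℝ)) x := by
  set f : ℕ × ℕ → ℝ := fun q ↦ (μ q.1 : ℝ) * x ^ (q.1 * q.2) / ((q.1 * q.2 : ℕ) : ℝ) with hf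
  -- summability
  have hy0 : 0 ≤ Real.sqrt x := Real.sqrt_nonneg x
  have hy1 : Real.sqrt x < 1 := by
    nlinarith [Real.sq_sqrt hx0, Real.sqrt_nonneg x]
  have hbound : ∀ q : ℕ × ℕ, |f q| ≤ Real.sqrt x ^ q.1 * Real.sqrt x ^ q.2 := by
    rintro ⟨m, k⟩
    rcases Nat.eq_zero_or_pos m with rfl | hm
    · simp only [hf, ArithmeticFunction.map_zero, Int.cast_zero, zero_mul, zero_div, abs_zero]
      positivity
    rcases Nat.eq_zero_or_pos k with rfl | hk
    · simp only [hf, Nat.mul_zero, Nat.cast_zero, div_zero, abs_zero]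
      positivity
    have h1 : |f (m, k)| ≤ x ^ (m * k) := by
      rw [hf, abs_div, abs_mul, abs_pow, abs_of_nonneg hx0]
      rcases eq_or_ne (μ m) 0 with h | h
      · simp [h]
        positivity
      · have : |(μ m : ℝ)| = 1 := by
          rcases ArithmeticFunction.moebius_ne_zero_iff_eq_or.mp h with h' | h' <;> simp [h']
        rw [this, one_mul, Nat.abs_cast]
        have hden : (1 : ℝ) ≤ ((m * k : ℕ) : ℝ) := by
          exact_mod_cast Nat.one_le_iff_ne_zero.mpr (by positivity)
        exact div_le_self (pow_nonneg hx0 _) hden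
    have h2 : x ^ (m * k) ≤ Real.sqrt x ^ m * Real.sqrt x ^ k := by
      have hxy : x = Real.sqrt x ^ 2 := (Real.sq_sqrt hx0).symm
      calc x ^ (m * k) = (Real.sqrt x ^ 2) ^ (m * k) := by rw [Real.sq_sqrt hx0]
        _ = Real.sqrt x ^ (2 * (m * k)) := by rw [← pow_mul]
        _ ≤ Real.sqrt x ^ (m + k) := by
            apply pow_le_pow_of_le_one hy0 hy1.le
            nlinarith
        _ = Real.sqrt x ^ m * Real.sqrt x ^ k := pow_add _ _ _
    exact h1.trans h2
  have hbsum : Summable fun q : ℕ × ℕ ↦ Real.sqrt x ^ q.1 * Real.sqrt x ^ q.2 := by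
    have hg : Summable fun n : ℕ ↦ ‖Real.sqrt x ^ n‖ := by
      simpa [abs_of_nonneg (pow_nonneg hy0 _)] using
        summable_geometric_of_lt_one hy0 hy1
    exact summable_mul_of_summable_norm hg hg
  have hsum : Summable f := hbsum.of_norm_bounded (by simpa using hbound)
  -- group fiberwise along q.1 * q.2
  have hfib := hsum.hasSum.tsum_fiberwise (fun q : ℕ × ℕ ↦ q.1 * q.2)
  have key : (fun n : ℕ ↦ ∑' q : (fun q : ℕ × ℕ ↦ q.1 * q.2) ⁻¹' {n}, f q)
      = fun n : ℕ ↦ if n = 1 then x else 0 := by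
    funext n
    rcases eq_or_ne n 0 with rfl | hn
    · have : ∀ q : (fun q : ℕ × ℕ ↦ q.1 * q.2) ⁻¹' {0}, f q = 0 := by
        rintro ⟨⟨m, k⟩, hq⟩
        simp only [Set.mem_preimage, Set.mem_singleton_iff] at hq
        rcases Nat.mul_eq_zero.mp hq with rfl | rfl
        · simp [hf]
        · simp [hf, Nat.mul_zero]
      simp [this, tsum_zero]
    · rw [show (fun q : ℕ × ℕ ↦ q.1 * q.2) ⁻¹' {n} = ↑n.divisorsAntidiagonal by
        ext q; simp [Nat.mem_divisorsAntidiagonal, hn, eq_comm]]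
      rw [Finset.tsum_subtype' n.divisorsAntidiagonal f]
      have hmz : ((μ * (ζ : ArithmeticFunction ℤ)) n : ℤ) = if n = 1 then 1 else 0 := by
        rw [ArithmeticFunction.moebius_mul_coe_zeta]
        simp [ArithmeticFunction.one_apply]
      rw [ArithmeticFunction.mul_apply] at hmz
      have hsum_eq : ∑ q ∈ n.divisorsAntidiagonal, f q
          = (∑ q ∈ n.divisorsAntidiagonal, (μ q.1 : ℝ)) * x ^ n / (n : ℝ) := by
        rw [Finset.sum_mul, Finset.sum_div]
        refine Finset.sum_congr rfl fun q hq ↦ ?_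
        rw [hf]
        have := (Nat.mem_divisorsAntidiagonal.mp hq).1
        simp only [this]
      rw [hsum_eq]
      have hmz' : (∑ q ∈ n.divisorsAntidiagonal, (μ q.1 : ℤ)) = if n = 1 then 1 else 0 := by
        rw [← hmz]
        refine Finset.sum_congr rfl fun q hq ↦ ?_
        have hq2 : q.2 ≠ 0 := (Nat.ne_zero_of_mem_divisorsAntidiagonal hq).2
        simp [ArithmeticFunction.natCoe_apply, ArithmeticFunction.zeta_apply, hq2]
      have hmz'' : (∑ q ∈ n.divisorsAntidiagonal, (μ q.1 : ℝ)) = if n = 1 then 1 else 0 := by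
        have := congrArg (fun z : ℤ ↦ (z : ℝ)) hmz'
        push_cast at this
        simpa using this
      rw [hmz'']
      rcases eq_or_ne n 1 with rfl | h1
      · simp
      · simp [h1]
  rw [key] at hfib
  have hx : HasSum (fun n : ℕ ↦ if n = 1 then x else 0) x := hasSum_ite_eq 1 x
  exact (hfib.unique hx) ▸ hsum.hasSum

lemma aux_moebius_hasSum' (x : ℝ) (hx0 : 0 ≤ x) (hx1 : x < 1) :
    HasSum (fun q : ℕ × ℕ ↦
      (μ (q.1 + 1) : ℝ) * x ^ ((q.1 + 1) * (q.2 + 1)) / (((q.1 : ℝ) + 1) * ((q.2 : ℝ) + 1))) x := by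
  have h := aux_moebius_hasSum x hx0 hx1
  have hinj : Function.Injective (fun q : ℕ × ℕ ↦ (q.1 + 1, q.2 + 1)) := by
    rintro ⟨a, b⟩ ⟨c, d⟩ h
    simpa [Prod.ext_iff] using h
  have hsupp : ∀ q ∉ Set.range (fun q : ℕ × ℕ ↦ (q.1 + 1, q.2 + 1)),
      (μ q.1 : ℝ) * x ^ (q.1 * q.2) / ((q.1 * q.2 : ℕ) : ℝ) = 0 := by
    rintro ⟨m, k⟩ hq
    rcases Nat.eq_zero_or_pos m with rfl | hm
    · simp
    rcases Nat.eq_zero_or_pos k with rfl | hk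
    · simp
    exact absurd ⟨(m - 1, k - 1), by simp [Nat.sub_add_cancel hm, Nat.sub_add_cancel hk]⟩ hq
  have h2 := (hinj.hasSum_iff hsupp).mpr h
  refine h2.congr_fun fun q ↦ ?_
  simp only [Function.comp]
  push_cast
  ring

lemma aux_prime_rpow_le_half {t : ℝ} (ht : 1 < t) (p : Nat.Primes) :
    ((p : ℕ) : ℝ) ^ (-t) ≤ 1 / 2 := by
  have hp2 : (2 : ℝ) ≤ ((p : ℕ) : ℝ) := by exact_mod_cast p.prop.two_le
  have h1 : (2 : ℝ) ^ t ≤ ((p : ℕ) : ℝ) ^ t :=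
    Real.rpow_le_rpow (by norm_num) hp2 (by linarith)
  have h2 : (2 : ℝ) ≤ (2 : ℝ) ^ t := by
    calc (2 : ℝ) = 2 ^ (1 : ℝ) := (Real.rpow_one 2).symm
    _ ≤ 2 ^ t := Real.rpow_le_rpow_of_exponent_le (by norm_num) ht.le
  have hppos : (0 : ℝ) < ((p : ℕ) : ℝ) ^ t := Real.rpow_pos_of_pos (by linarith) t
  rw [Real.rpow_neg (by linarith), ← one_div]
  rw [div_le_div_iff₀ hppos (by norm_num)]
  linarith

lemma aux_summable_neg_log {t : ℝ} (ht : 1 < t) :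
    Summable (fun p : Nat.Primes ↦ -Real.log (1 - ((p : ℕ) : ℝ) ^ (-t))) := by
  have hsum : Summable (fun p : Nat.Primes ↦ ((p : ℕ) : ℝ) ^ (-t)) :=
    Nat.Primes.summable_rpow.mpr (by linarith)
  refine (hsum.mul_left 2).of_nonneg_of_le (fun p ↦ ?_) (fun p ↦ ?_)
  · have hx1 : ((p : ℕ) : ℝ) ^ (-t) ≤ 1 / 2 := aux_prime_rpow_le_half ht p
    have hx0 : 0 ≤ ((p : ℕ) : ℝ) ^ (-t) := Real.rpow_nonneg (by positivity) _
    have : Real.log (1 - ((p : ℕ) : ℝ) ^ (-t)) ≤ 0 :=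
      Real.log_nonpos (by linarith) (by linarith)
    linarith
  · set x := ((p : ℕ) : ℝ) ^ (-t) with hx
    have hx1 : x ≤ 1 / 2 := aux_prime_rpow_le_half ht p
    have hx0 : 0 ≤ x := Real.rpow_nonneg (by positivity) _
    have hpos : 0 < (1 - x)⁻¹ := by
      rw [inv_pos]; linarith
    have := Real.log_le_sub_one_of_pos hpos
    rw [Real.log_inv] at this
    have h2 : (1 - x)⁻¹ - 1 ≤ 2 * x := by
      rw [inv_eq_one_div, div_sub' (by linarith : (1 : ℝ) - x ≠ 0)]
      rw [div_le_iff₀ (by linarith : (0:ℝ) < 1 - x)]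
      nlinarith
    linarith

lemma aux_log_zeta_re {t : ℝ} (ht : 1 < t) :
    Real.log ((riemannZeta ((t : ℝ) : ℂ)).re)
      = ∑' p : Nat.Primes, -Real.log (1 - ((p : ℕ) : ℝ) ^ (-t)) := by
  set A := ∑' p : Nat.Primes, -Real.log (1 - ((p : ℕ) : ℝ) ^ (-t)) with hA
  have hz := riemannZeta_eulerProduct_exp_log (s := ((t : ℝ) : ℂ)) (by simp [ht])
  have hterm : ∀ p : Nat.Primes,
      -Complex.log (1 - ((p : ℕ) : ℂ) ^ (-((t : ℝ) : ℂ)))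
        = ((-Real.log (1 - ((p : ℕ) : ℝ) ^ (-t)) : ℝ) : ℂ) := by
    intro p
    have hp0 : (0 : ℝ) ≤ ((p : ℕ) : ℝ) := by positivity
    have hcp : ((p : ℕ) : ℂ) ^ (-((t : ℝ) : ℂ)) = ((((p : ℕ) : ℝ) ^ (-t) : ℝ) : ℂ) := by
      rw [Complex.ofReal_cpow hp0]
      push_cast
      ring_nf
    rw [hcp]
    have hx1 : ((p : ℕ) : ℝ) ^ (-t) ≤ 1 / 2 := aux_prime_rpow_le_half ht p
    have hpos : (0 : ℝ) < 1 - ((p : ℕ) : ℝ) ^ (-t) := by linarith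
    rw [← Complex.ofReal_one, ← Complex.ofReal_sub, ← Complex.ofReal_log hpos.le]
    push_cast
    ring
  have : (∑' p : Nat.Primes, -Complex.log (1 - ((p : ℕ) : ℂ) ^ (-((t : ℝ) : ℂ)))) = (A : ℂ) := by
    rw [hA, Complex.ofReal_tsum]
    exact tsum_congr hterm
  rw [this] at hz
  rw [← Complex.ofReal_exp] at hz
  have : (riemannZeta ((t : ℝ) : ℂ)).re = Real.exp A := by
    rw [← hz, Complex.ofReal_re]
  rw [this, Real.log_exp]

def auxShiftEquiv : Nat.Primes × (ℕ × ℕ) ≃ ℕ × (Nat.Primes × ℕ) where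
  toFun z := (z.2.1, (z.1, z.2.2))
  invFun z := (z.2.1, (z.1, z.2.2))
  left_inv _ := rfl
  right_inv _ := rfl

theorem primeZeta_eq_sum_moebius_log_zeta (s : ℝ) (hs : 1 < s) :
    (∑' p : Nat.Primes, ((p : ℕ) : ℝ) ^ (-s)) =
      ∑' m : ℕ,
        ((ArithmeticFunction.moebius (m + 1) : ℝ) / ((m:ℝ) + 1))
          * Real.log ((riemannZeta (((((m:ℝ) + 1) * s : ℝ)) : ℂ)).re) := by
  set x : Nat.Primes → ℝ := fun p ↦ ((p : ℕ) : ℝ) ^ (-s) with hx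
  have hx0 : ∀ p, 0 ≤ x p := fun p ↦ Real.rpow_nonneg (by positivity) _
  have hxh : ∀ p, x p ≤ 1 / 2 := fun p ↦ aux_prime_rpow_le_half hs p
  set H : ℕ × (Nat.Primes × ℕ) → ℝ := fun z ↦
    (μ (z.1 + 1) : ℝ) * x z.2.1 ^ ((z.1 + 1) * (z.2.2 + 1))
      / (((z.1 : ℝ) + 1) * ((z.2.2 : ℝ) + 1)) with hH
  -- summability of H
  have hxsum : Summable x := Nat.Primes.summable_rpow.mpr (by linarith)
  have hgeo : Summable fun n : ℕ ↦ ‖(1 / 2 : ℝ) ^ n‖ := by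
    have : ∀ n : ℕ, ‖(1 / 2 : ℝ) ^ n‖ = (1 / 2 : ℝ) ^ n := fun n ↦ by
      rw [Real.norm_eq_abs, abs_of_nonneg (by positivity)]
    rw [funext this]
    exact summable_geometric_of_lt_one (by norm_num) (by norm_num)
  have hgsum : Summable fun w : Nat.Primes × ℕ ↦ x w.1 * (1 / 2 : ℝ) ^ w.2 := by
    refine summable_mul_of_summable_norm ?_ hgeo
    simpa [Real.norm_eq_abs, abs_of_nonneg (hx0 _)] using hxsum
  have hHsum : Summable H := by
    have hbsum : Summable fun z : ℕ × (Nat.Primes × ℕ) ↦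
        (1 / 2 : ℝ) ^ z.1 * (x z.2.1 * (1 / 2 : ℝ) ^ z.2.2) := by
      refine summable_mul_of_summable_norm (g := fun w : Nat.Primes × ℕ ↦ x w.1 * (1 / 2 : ℝ) ^ w.2) hgeo ?_
      refine hgsum.congr fun w ↦ ?_
      rw [Real.norm_eq_abs, abs_of_nonneg (mul_nonneg (hx0 w.1) (by positivity))]
    refine hbsum.of_norm_bounded fun z ↦ ?_
    obtain ⟨m, p, k⟩ := z
    have h1 : ‖H (m, p, k)‖ ≤ x p ^ ((m + 1) * (k + 1)) := by
      rw [hH, Real.norm_eq_abs, abs_div, abs_mul, abs_pow, abs_of_nonneg (hx0 p)]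
      have hm1 : |(μ (m + 1) : ℝ)| ≤ 1 := by
        rcases ArithmeticFunction.moebius_eq_or (m + 1) with h | h | h <;> simp [h]
      have hd1 : (1 : ℝ) ≤ |((m : ℝ) + 1) * ((k : ℝ) + 1)| := by
        rw [abs_of_nonneg (by positivity)]
        have h1 : (0 : ℝ) ≤ (m : ℝ) := Nat.cast_nonneg m
        have h2 : (0 : ℝ) ≤ (k : ℝ) := Nat.cast_nonneg k
        nlinarith
      calc |(μ (m + 1) : ℝ)| * x p ^ ((m + 1) * (k + 1)) / |((m : ℝ) + 1) * ((k : ℝ) + 1)|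
          ≤ 1 * x p ^ ((m + 1) * (k + 1)) / 1 := by
            gcongr
        _ = x p ^ ((m + 1) * (k + 1)) := by ring
    have h2 : x p ^ ((m + 1) * (k + 1)) ≤ (1 / 2 : ℝ) ^ m * (x p * (1 / 2 : ℝ) ^ k) := by
      have hxlt : x p < 1 := lt_of_le_of_lt (hxh p) (by norm_num)
      calc x p ^ ((m + 1) * (k + 1)) ≤ x p ^ (m + k + 1) := by
            apply pow_le_pow_of_le_one (hx0 p) hxlt.le
            nlinarith [Nat.zero_le m, Nat.zero_le k]
        _ = x p ^ m * x p ^ k * x p := by ring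
        _ ≤ (1 / 2 : ℝ) ^ m * (1 / 2 : ℝ) ^ k * x p := by
            gcongr <;> first | exact hx0 p | exact hxh p
        _ = (1 / 2 : ℝ) ^ m * (x p * (1 / 2 : ℝ) ^ k) := by ring
    exact h1.trans h2
  -- T = ∑' H both ways
  -- direction 1 : via equiv, equals LHS
  have hHe : Summable (H ∘ auxShiftEquiv) := auxShiftEquiv.summable_iff.mpr hHsum
  have hleft : ∑' z, H z = ∑' p : Nat.Primes, x p := by
    rw [← auxShiftEquiv.tsum_eq H]
    have : ∑' z : Nat.Primes × (ℕ × ℕ), H (auxShiftEquiv z)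
        = ∑' (p : Nat.Primes) (q : ℕ × ℕ), H (auxShiftEquiv (p, q)) :=
      hHe.tsum_prod' fun p ↦ hHe.prod_factor p
    rw [this]
    refine tsum_congr fun p ↦ ?_
    have := aux_moebius_hasSum' (x p) (hx0 p) (lt_of_le_of_lt (hxh p) (by norm_num))
    exact this.tsum_eq
  -- direction 2 : equals RHS
  have hright : ∑' z, H z
      = ∑' m : ℕ, ((μ (m + 1) : ℝ) / ((m : ℝ) + 1))
          * Real.log ((riemannZeta (((((m : ℝ) + 1) * s : ℝ)) : ℂ)).re) := by
    rw [hHsum.tsum_prod' fun m ↦ hHsum.prod_factor m]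
    refine tsum_congr fun m ↦ ?_
    have htm : 1 < ((m : ℝ) + 1) * s := by
      have h1 : (0 : ℝ) ≤ (m : ℝ) := Nat.cast_nonneg m
      nlinarith
    -- rewrite the log
    rw [aux_log_zeta_re htm]
    -- per-prime inner expansions
    have hy : ∀ p : Nat.Primes, ((p : ℕ) : ℝ) ^ (-(((m : ℝ) + 1) * s)) = x p ^ (m + 1) := by
      intro p
      have hp0 : (0 : ℝ) ≤ ((p : ℕ) : ℝ) := by positivity
      rw [hx]
      rw [show -(((m : ℝ) + 1) * s) = (-s) * ((m + 1 : ℕ) : ℝ) by push_cast; ring]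
      rw [Real.rpow_mul hp0, Real.rpow_natCast]
    have hinner : ∀ p : Nat.Primes,
        HasSum (fun k : ℕ ↦ H (m, p, k))
          (((μ (m + 1) : ℝ) / ((m : ℝ) + 1)) * -Real.log (1 - ((p : ℕ) : ℝ) ^ (-(((m : ℝ) + 1) * s)))) := by
      intro p
      have hxm1 : |x p ^ (m + 1)| < 1 := by
        rw [abs_of_nonneg (pow_nonneg (hx0 p) _)]
        exact pow_lt_one₀ (hx0 p) (lt_of_le_of_lt (hxh p) (by norm_num)) (Nat.succ_ne_zero m)
      have h0 := Real.hasSum_pow_div_log_of_abs_lt_one hxm1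
      have h1 := h0.mul_left ((μ (m + 1) : ℝ) / ((m : ℝ) + 1))
      rw [hy p]
      refine h1.congr_fun fun k ↦ ?_
      rw [hH]
      simp only
      rw [← pow_mul, div_mul_div_comm]
    have hsummand : ∀ p : Nat.Primes, Summable fun k : ℕ ↦ H (m, p, k) :=
      fun p ↦ ((hHsum.prod_factor m).prod_factor p)
    rw [(hHsum.prod_factor m).tsum_prod' (fun p ↦ hsummand p)]
    have : ∀ p : Nat.Primes, ∑' k : ℕ, H (m, p, k)
        = ((μ (m + 1) : ℝ) / ((m : ℝ) + 1))
            * -Real.log (1 - ((p : ℕ) : ℝ) ^ (-(((m : ℝ) + 1) * s))) :=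
      fun p ↦ (hinner p).tsum_eq
    rw [tsum_congr this, tsum_mul_left]
  rw [← hleft, hright]
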